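/- Let (p_i, x_i), i ∈ ι, be a non-degenerate two-commodity consumer data-set on a finite index set. Then the revealed preference digraph D_⪰ is acyclic if and only if it contains no digon; that is, the data satisfy the Generalized Axiom of Revealed Preference if and only if they satisfy the Weak Axiom of Revealed Preference. -/

import Mathlib

/-- Dot product in `ℝ²`. -/
def dot2 (p x : Fin 2 → ℝ) : ℝ := ∑ k, p k * x k

lemma dot2_eq (p q : Fin 2 → ℝ) : dot2 p q = p 0 * q 0 + p 1 * q 1 := by
  simp [dot2, Fin.sum_univ_two]

lemma cone2 {u v m : Fin 2 → ℝ}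
    (hus : 0 < u 0 + u 1) (hvs : 0 < v 0 + v 1) (hms : 0 < m 0 + m 1)
    (h1 : u 1 / (u 0 + u 1) ≤ m 1 / (m 0 + m 1))
    (h2 : m 1 / (m 0 + m 1) ≤ v 1 / (v 0 + v 1)) :
    ∃ a b : ℝ, 0 ≤ a ∧ 0 ≤ b ∧ m 0 = a * u 0 + b * v 0 ∧ m 1 = a * u 1 + b * v 1 := by
  have hum : 0 ≤ u 0 * m 1 - u 1 * m 0 := by
    rw [div_le_div_iff₀ hus hms] at h1; nlinarith
  have hmv : 0 ≤ m 0 * v 1 - m 1 * v 0 := by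
    rw [div_le_div_iff₀ hms hvs] at h2; nlinarith
  by_cases hD : 0 < u 0 * v 1 - u 1 * v 0
  · refine ⟨(m 0 * v 1 - m 1 * v 0) / (u 0 * v 1 - u 1 * v 0),
      (u 0 * m 1 - u 1 * m 0) / (u 0 * v 1 - u 1 * v 0),
      div_nonneg hmv hD.le, div_nonneg hum hD.le, ?_, ?_⟩
    · rw [div_mul_eq_mul_div, div_mul_eq_mul_div, ← add_div, eq_div_iff hD.ne']
      ring_nf
    · rw [div_mul_eq_mul_div, div_mul_eq_mul_div, ← add_div, eq_div_iff hD.ne']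
      ring_nf
  · push_neg at hD
    have h3 : v 1 / (v 0 + v 1) ≤ u 1 / (u 0 + u 1) := by
      rw [div_le_div_iff₀ hvs hus]; nlinarith
    have h4 : u 1 / (u 0 + u 1) = m 1 / (m 0 + m 1) := le_antisymm h1 (h2.trans h3)
    have h5 : u 1 * (m 0 + m 1) = m 1 * (u 0 + u 1) := by
      rw [div_eq_div_iff hus.ne' hms.ne'] at h4; linarith
    refine ⟨(m 0 + m 1) / (u 0 + u 1), 0, div_nonneg hms.le hus.le, le_refl 0, ?_, ?_⟩
    · field_simp; nlinarith
    · field_simp; nlinarith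

lemma mod_succ_eq {m e : ℕ} : (e+1) % m = (e % m + 1) % m := by
  conv_lhs => rw [show e + 1 = m * (e/m) + (e % m + 1) by
    rw [← Nat.add_assoc, Nat.div_add_mod]]
  rw [Nat.mul_add_mod]

lemma mod_succ_step {m e : ℕ} (h : e % m + 1 < m) : (e+1) % m = e % m + 1 := by
  rw [mod_succ_eq, Nat.mod_eq_of_lt h]

lemma mod_succ_wrap {m e : ℕ} (h : e % m + 1 = m) : (e+1) % m = 0 := by
  rw [mod_succ_eq, h, Nat.mod_self]

/-- **GARP ⇔ WARP for two commodities.** For a non-degenerate two-commodity consumer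
data-set on a finite index set, the revealed preference digraph is acyclic if and only if
it contains no digon. -/
theorem stmt2 {ι : Type*} [Fintype ι] (p x : ι → Fin 2 → ℝ)
    (hp : ∀ i k, 0 ≤ p i k) (hx : ∀ i k, 0 ≤ x i k)
    (hdistinct : ∀ i j, i ≠ j → x i ≠ x j)
    (hnoties : ∀ i j, i ≠ j → dot2 (p i) (x j) ≠ dot2 (p i) (x i)) :
    (∀ i, ¬ Relation.TransGen
        (fun a b => a ≠ b ∧ dot2 (p a) (x b) ≤ dot2 (p a) (x a)) i i) ↔
      ¬ ∃ i j, i ≠ j ∧ dot2 (p i) (x j) ≤ dot2 (p i) (x i) ∧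
        dot2 (p j) (x i) ≤ dot2 (p j) (x j) := by
  classical
  set R : ι → ι → Prop := fun a b => a ≠ b ∧ dot2 (p a) (x b) ≤ dot2 (p a) (x a) with hRdef
  constructor
  · intro h
    rintro ⟨i, j, hij, h1, h2⟩
    exact h i (Relation.TransGen.head ⟨hij, h1⟩
      (Relation.TransGen.single ⟨hij.symm, h2⟩))
  · intro hW i₀ hcyc
    -- extract a finite path
    have hpath : ∀ {a b : ι}, Relation.TransGen R a b →
        ∃ (k : ℕ) (f : ℕ → ι), f 0 = a ∧ f (k+1) = b ∧ ∀ e, e ≤ k → R (f e) (f (e+1)) := by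
      intro a b h
      induction h with
      | @single b' hab =>
        exact ⟨0, fun e => if e = 0 then a else b', by simp, by simp, by
          intro e he
          have : e = 0 := Nat.le_zero.mp he
          subst this
          simpa using hab⟩
      | @tail b' c' _ hbc ih =>
        obtain ⟨k, f, hf0, hfk, hfe⟩ := ih
        refine ⟨k+1, fun e => if e ≤ k+1 then f e else c', by simpa using hf0, by simp, ?_⟩
        intro e he
        rcases Nat.lt_or_ge e (k+1) with hlt | hge
        · have h1 : e ≤ k + 1 := hlt.le
          have h2 : e + 1 ≤ k + 1 := hlt
          simp only [if_pos h1, if_pos h2]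
          exact hfe e (by omega)
        · have he' : e = k + 1 := le_antisymm he hge
          subst he'
          simp only [le_refl, if_pos, if_neg (by omega : ¬ (k+1+1 ≤ k+1))]
          rw [hfk]
          exact hbc
    obtain ⟨k, f, hf0, hfk, hfe⟩ := hpath hcyc
    -- cycles as periodic functions
    set Q : ℕ → Prop := fun nn =>
      0 < nn ∧ ∃ g : ℕ → ι, (∀ e, g (e + nn) = g e) ∧ ∀ e, R (g e) (g (e+1)) with hQdef
    have hQex : ∃ nn, Q nn := by
      refine ⟨k+1, Nat.succ_pos k, fun e => f (e % (k+1)), fun e => by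
        simp [Nat.add_mod_right], ?_⟩
      intro e
      show R (f (e % (k+1))) (f ((e+1) % (k+1)))
      have hrlt : e % (k+1) < k + 1 := Nat.mod_lt _ (Nat.succ_pos k)
      rcases Nat.lt_or_ge (e % (k+1)) k with hlt | hge
      · rw [mod_succ_step (by omega)]
        exact hfe _ (by omega)
      · have hr : e % (k+1) = k := by omega
        rw [mod_succ_wrap (by omega), hr]
        have : f 0 = f (k+1) := by rw [hf0, hfk]
        rw [this]
        exact hfe k (le_refl k)
    obtain ⟨hn_pos, g, hper, hedge⟩ := Nat.find_spec hQex
    set n := Nat.find hQex with hn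
    have hmin : ∀ m, m < n → ¬ Q m := fun m hm => Nat.find_min hQex hm
    -- gluing helper: build a shorter cycle
    have glue : ∀ (β L : ℕ), 0 < L → R (g (β + (L-1))) (g β) → Q L := by
      intro β L hL hlast
      refine ⟨hL, fun s => g (β + s % L), fun s => by
        show g (β + (s + L) % L) = g (β + s % L)
        rw [Nat.add_mod_right], ?_⟩
      intro s
      show R (g (β + s % L)) (g (β + (s+1) % L))
      have hslt : s % L < L := Nat.mod_lt _ hL
      rcases Nat.lt_or_ge (s % L + 1) L with hlt | hge
      · rw [mod_succ_step hlt, ← Nat.add_assoc]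
        exact hedge (β + s % L)
      · have hr : s % L = L - 1 := by omega
        rw [mod_succ_wrap (by omega), hr, Nat.add_zero]
        exact hlast
    -- strict edge inequalities
    have hA : ∀ e, dot2 (p (g e)) (x (g (e+1))) < dot2 (p (g e)) (x (g e)) := by
      intro e
      exact lt_of_le_of_ne (hedge e).2 (hnoties _ _ (hedge e).1)
    -- n ≥ 3
    have hn1 : n ≠ 1 := by
      intro h1
      apply (hedge 0).1
      have := hper 0
      rw [h1] at this
      exact this.symm
    have hn2 : n ≠ 2 := by
      intro h2
      apply hW
      refine ⟨g 0, g 1, (hedge 0).1, (hedge 0).2, ?_⟩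
      have h02 : g 2 = g 0 := by have := hper 0; rwa [h2] at this
      have := (hedge 1).2
      rwa [show (1:ℕ)+1 = 2 from rfl, h02] at this
    have hn3 : 3 ≤ n := by omega
    -- chord inequalities
    have hC : ∀ e δ, 2 ≤ δ → δ ≤ n - 1 →
        dot2 (p (g e)) (x (g e)) < dot2 (p (g e)) (x (g (e+δ))) := by
      intro e δ h2 hδ
      by_contra hle
      push_neg at hle
      by_cases heq : g e = g (e + δ)
      · have hlast := hedge (e + (δ - 1))
        rw [show e + (δ-1) + 1 = e + δ by omega, ← heq] at hlast
        exact hmin δ (by omega) (glue e δ (by omega) (by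
          rwa [show e + (δ - 1) = e + (δ-1) from rfl] at hlast))
      · have hRe : R (g e) (g (e + δ)) := ⟨heq, hle⟩
        have hlast : R (g (e + δ + (n - δ + 1 - 1))) (g (e + δ)) := by
          rw [show e + δ + (n - δ + 1 - 1) = e + n by omega, hper]
          exact hRe
        exact hmin (n - δ + 1) (by omega) (glue (e+δ) (n-δ+1) (by omega) hlast)
    -- positivity of price sums
    have hpos : ∀ e, 0 < p (g e) 0 + p (g e) 1 := by
      intro e
      rcases lt_or_ge 0 (p (g e) 0 + p (g e) 1) with h | h
      · exact h
      · exfalso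
        have h0 : p (g e) 0 = 0 := le_antisymm (by linarith [hp (g e) 1]) (hp (g e) 0)
        have h1 : p (g e) 1 = 0 := le_antisymm (by linarith [hp (g e) 0]) (hp (g e) 1)
        have := hA e
        rw [dot2_eq, dot2_eq, h0, h1] at this
        simp at this
    -- mod lemma
    have hmod : ∀ e, g e = g (e % n) := by
      intro e
      induction e using Nat.strong_induction_on with
      | _ e ih =>
        by_cases he : e < n
        · rw [Nat.mod_eq_of_lt he]
        · push_neg at he
          calc g e = g (e - n + n) := by rw [Nat.sub_add_cancel he]
          _ = g (e - n) := hper _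
          _ = g ((e - n) % n) := ih _ (by omega)
          _ = g (e % n) := by rw [← Nat.mod_eq_sub_mod he]
    -- angle function and argmin
    set Θ : ℕ → ℝ := fun e => p (g e) 1 / (p (g e) 0 + p (g e) 1) with hΘdef
    obtain ⟨v, hvmem, hvmin⟩ :=
      Finset.exists_min_image (Finset.range n) Θ ⟨0, Finset.mem_range.mpr hn_pos⟩
    have hv : ∀ j, Θ v ≤ Θ j := by
      intro j
      have hj : Θ j = Θ (j % n) := by simp only [hΘdef]; rw [hmod j]
      rw [hj]
      exact hvmin _ (Finset.mem_range.mpr (Nat.mod_lt _ hn_pos))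
    set t := v + (n - 1) with ht
    have hgt1 : g (t + 1) = g v := by
      rw [show t + 1 = v + n by omega]; exact hper v
    have hΘt1 : ∀ j, Θ (t+1) ≤ Θ j := by
      intro j
      have : Θ (t+1) = Θ v := by simp only [hΘdef]; rw [hgt1]
      rw [this]; exact hv j
    have hθ : ∀ j, p (g (t+1)) 1 / (p (g (t+1)) 0 + p (g (t+1)) 1)
        ≤ p (g j) 1 / (p (g j) 0 + p (g j) 1) := by
      intro j
      have := hΘt1 j
      simpa only [hΘdef] using this
    rcases le_or_gt (Θ (t+2)) (Θ t) with hcaseB | hcaseA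
    · -- Case B
      have hcb : p (g (t+2)) 1 / (p (g (t+2)) 0 + p (g (t+2)) 1)
          ≤ p (g t) 1 / (p (g t) 0 + p (g t) 1) := by
        simpa only [hΘdef] using hcaseB
      obtain ⟨a, b, ha, hb, He0, He1⟩ :=
        cone2 (u := p (g (t+1))) (v := p (g t)) (m := p (g (t+2)))
          (hpos (t+1)) (hpos t) (hpos (t+2)) (hθ (t+2)) hcb
      have key : ∀ z : Fin 2 → ℝ, dot2 (p (g (t+2))) z
          = a * dot2 (p (g (t+1))) z + b * dot2 (p (g t)) z := by
        intro z
        rw [dot2_eq, dot2_eq, dot2_eq, He0, He1]; ring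
      rcases eq_or_lt_of_le hn3 with h3 | h4
      · -- n = 3
        have F1 := hC (t+2) 2 (le_refl 2) (by omega)
        rw [show t+2+2 = t+1+n by omega, hper] at F1
        have F2 := hA (t+2)
        rw [show t+2+1 = t+n by omega, hper] at F2
        have F3 := hC (t+1) 2 (le_refl 2) (by omega)
        rw [show t+1+2 = t+n by omega, hper] at F3
        have F4 := hA t
        have E1 := key (x (g (t+1)))
        have E2 := key (x (g t))
        nlinarith [F1, F2, E1, E2, mul_nonneg ha (sub_nonneg.mpr F3.le),
          mul_nonneg hb (sub_nonneg.mpr F4.le)]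
      · -- n ≥ 4 : walk along the cycle
        set fm : ℕ → ℝ := fun e => dot2 (p (g (t+2))) (x (g (t+e))) with hfm
        set fA : ℕ → ℝ := fun e => dot2 (p (g (t+1))) (x (g (t+e))) with hfA
        set fB : ℕ → ℝ := fun e => dot2 (p (g t)) (x (g (t+e))) with hfB
        have hkey : ∀ e, fm e = a * fA e + b * fB e := by
          intro e
          simp only [hfm, hfA, hfB]
          exact key _
        obtain ⟨d, hd3, hdn1, hgood⟩ : ∃ d, 3 ≤ d ∧ d ≤ n - 1 ∧
            ∀ e, 3 ≤ e → e < d → 0 ≤ fm e - fm (e+1) := by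
          by_cases hF : ∃ e, 3 ≤ e ∧ e ≤ n - 2 ∧ fm e - fm (e+1) < 0
          · obtain ⟨h3d, hdn2, _⟩ := Nat.find_spec hF
            refine ⟨Nat.find hF, h3d, by omega, ?_⟩
            intro e he3 hed
            have hnot := Nat.find_min hF hed
            push_neg at hnot
            exact hnot he3 (by omega)
          · push_neg at hF
            refine ⟨n-1, by omega, le_refl _, ?_⟩
            intro e he3 hed
            exact hF e he3 (by omega)
        have G1 := hC t d (by omega) hdn1
        have G2 := hC (t+1) (d-1) (by omega) (by omega)
        rw [show t+1+(d-1) = t+d by omega] at G2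
        have hG1' : fB 0 < fB d := by
          simp only [hfB, Nat.add_zero]
          exact G1
        have hG2' : fA 1 < fA d := by
          simp only [hfA]
          exact G2
        have hB0 : fB 1 < fB 0 := by
          simp only [hfB, Nat.add_zero]
          exact hA t
        -- telescoping
        have T1 : ∑ e ∈ Finset.range (d-1), (fB (e+1) - fB (e+1+1)) = fB 1 - fB d := by
          have h := Finset.sum_range_sub' (fun e => fB (e+1)) (d-1)
          simpa only [show d - 1 + 1 = d by omega, Nat.zero_add] using h
        have TA : ∑ e ∈ Finset.range (d-1), (fA (e+1) - fA (e+1+1)) = fA 1 - fA d := by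
          have h := Finset.sum_range_sub' (fun e => fA (e+1)) (d-1)
          simpa only [show d - 1 + 1 = d by omega, Nat.zero_add] using h
        have Tm : ∑ e ∈ Finset.range (d-1), (fm (e+1) - fm (e+1+1))
            = a * (fA 1 - fA d) + b * (fB 1 - fB d) := by
          rw [← T1, ← TA, Finset.mul_sum, Finset.mul_sum, ← Finset.sum_add_distrib]
          refine Finset.sum_congr rfl (fun e _ => ?_)
          rw [hkey, hkey]; ring
        -- positivity of the walk sum
        have hterm0 : 0 < fm 1 - fm 2 := by
          have F1 := hC (t+2) (n-1) (by omega) (le_refl _)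
          rw [show t+2+(n-1) = t+1+n by omega, hper] at F1
          simp only [hfm]
          linarith [F1]
        have hterm1 : 0 < fm 2 - fm 3 := by
          have F2 := hA (t+2)
          rw [show t+2+1 = t+3 by omega] at F2
          simp only [hfm]
          linarith [F2]
        have htermge : ∀ e ∈ Finset.range (d-1), 0 ≤ fm (e+1) - fm (e+1+1) := by
          intro e he
          have hed : e < d - 1 := Finset.mem_range.mp he
          match e with
          | 0 => exact hterm0.le
          | 1 => exact hterm1.le
          | (e+2) => exact hgood (e+3) (by omega) (by omega)
        have hsum : 0 < ∑ e ∈ Finset.range (d-1), (fm (e+1) - fm (e+1+1)) :=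
          Finset.sum_pos' htermge ⟨0, Finset.mem_range.mpr (by omega), hterm0⟩
        nlinarith [Tm, hsum, mul_nonneg ha (by linarith : (0:ℝ) ≤ fA d - fA 1),
          mul_nonneg hb (by linarith : (0:ℝ) ≤ fB d - fB 1)]
    · -- Case A
      have hca : p (g t) 1 / (p (g t) 0 + p (g t) 1)
          ≤ p (g (t+2)) 1 / (p (g (t+2)) 0 + p (g (t+2)) 1) := by
        simpa only [hΘdef] using hcaseA.le
      obtain ⟨a, b, ha, hb, He0, He1⟩ :=
        cone2 (u := p (g (t+1))) (v := p (g (t+2))) (m := p (g t))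
          (hpos (t+1)) (hpos (t+2)) (hpos t) (hθ t) hca
      have key : ∀ z : Fin 2 → ℝ, dot2 (p (g t)) z
          = a * dot2 (p (g (t+1))) z + b * dot2 (p (g (t+2))) z := by
        intro z
        rw [dot2_eq, dot2_eq, dot2_eq, He0, He1]; ring
      have F1 := hA t
      have F2 := hC t 2 (le_refl 2) (by omega)
      have F3 := hA (t+1)
      rw [show t+1+1 = t+2 by omega] at F3
      have F4 := hC (t+2) (n-1) (by omega) (le_refl _)
      rw [show t+2+(n-1) = t+1+n by omega, hper] at F4
      have E1 := key (x (g (t+1)))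
      have E2 := key (x (g (t+2)))
      nlinarith [F1, F2, E1, E2, mul_nonneg ha (sub_nonneg.mpr F3.le),
        mul_nonneg hb (sub_nonneg.mpr F4.le)]
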